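/- Let M and N be compact connected Hausdorff one-dimensional complex manifolds (charted spaces over ℂ with holomorphic transition maps, i.e., IsManifold 𝓘(ℂ,ℂ)), and let f : M → N be a nonconstant holomorphic map (MDifferentiable with respect to 𝓘(ℂ,ℂ)). Then for every point p ∈ N the fiber f⁻¹(p) is finite and nonempty. -/

import Mathlib

open scoped Manifold
open Set Filter Topology

/-! In a chart, a holomorphic map of Riemann surfaces is a holomorphic function of one variable,
so at each point it is either locally constant, or it has an isolated fibre and is open there.
By the identity theorem the locus of local constancy is clopen, hence empty for a nonconstant
map on a connected surface. Each fibre is then a compact discrete set, hence finite, and the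
image is open and compact, hence all of the connected target. -/

section ChartRepresentation

variable {𝕜 : Type*} [NontriviallyNormedField 𝕜]
  {E : Type*} [NormedAddCommGroup E] [NormedSpace 𝕜 E] {H : Type*} [TopologicalSpace H]
  {I : ModelWithCorners 𝕜 E H} {M : Type*} [TopologicalSpace M] [ChartedSpace H M]
  {E' : Type*} [NormedAddCommGroup E'] [NormedSpace 𝕜 E'] {H' : Type*} [TopologicalSpace H']
  {I' : ModelWithCorners 𝕜 E' H'} {M' : Type*} [TopologicalSpace M'] [ChartedSpace H' M']
  {f : M → M'} {x : M}

theorem writtenInExtChartAt_comp_extChartAt_eventuallyEq :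
    writtenInExtChartAt I I' x f ∘ extChartAt I x =ᶠ[𝓝 x] extChartAt I' (f x) ∘ f := by
  filter_upwards [extChartAt_source_mem_nhds (I := I) x] with y hy
  simp only [writtenInExtChartAt, Function.comp_apply, (extChartAt I x).left_inv hy]

theorem ContinuousAt.eventuallyEq_extChartAt_symm_comp_writtenInExtChartAt
    (hf : ContinuousAt f x) :
    f =ᶠ[𝓝 x] (extChartAt I' (f x)).symm ∘ writtenInExtChartAt I I' x f ∘ extChartAt I x := by
  filter_upwards [writtenInExtChartAt_comp_extChartAt_eventuallyEq (I := I) (I' := I') (f := f),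
    hf.preimage_mem_nhds (extChartAt_source_mem_nhds (I := I') (f x))] with y hy hfy
  simp only [Function.comp_apply] at hy ⊢
  rw [hy, (extChartAt I' (f x)).left_inv hfy]

theorem ContinuousAt.eventually_eq_of_writtenInExtChartAt_eventuallyEq_const
    (hf : ContinuousAt f x) {c : E'}
    (h : writtenInExtChartAt I I' x f =ᶠ[𝓝 (extChartAt I x x)] fun _ => c) :
    ∀ᶠ y in 𝓝 x, f y = f x := by
  have hrep := hf.eventuallyEq_extChartAt_symm_comp_writtenInExtChartAt (I := I) (I' := I')
  filter_upwards [hrep, (continuousAt_extChartAt x).eventually h] with y hy hgy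
  calc f y = (extChartAt I' (f x)).symm c := by
        rw [hy, Function.comp_apply, Function.comp_apply, hgy]
    _ = f x := by
      have hc : writtenInExtChartAt I I' x f (extChartAt I x x) = c := h.self_of_nhds
      rw [← hc]; exact hrep.self_of_nhds.symm

theorem writtenInExtChartAt_eventuallyEq_const_of_eventually_eq {y : M}
    (hy : y ∈ (extChartAt I x).source) (h : ∀ᶠ w in 𝓝 y, f w = f y) :
    writtenInExtChartAt I I' x f =ᶠ[𝓝 (extChartAt I x y)]
      fun _ => extChartAt I' (f x) (f y) := by
  have hsymm : Tendsto (extChartAt I x).symm (𝓝 (extChartAt I x y)) (𝓝 y) := by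
    have := continuousAt_extChartAt_symm' (I := I) hy
    rwa [ContinuousAt, (extChartAt I x).left_inv hy] at this
  filter_upwards [hsymm.eventually h] with z hz
  simp only [writtenInExtChartAt, Function.comp_apply, hz]

theorem MDifferentiable.eventually_differentiableAt_writtenInExtChartAt [I.Boundaryless]
    [IsManifold I 1 M] [IsManifold I' 1 M'] (hf : MDifferentiable I I' f) (x : M) :
    ∀ᶠ z in 𝓝 (extChartAt I x x), DifferentiableAt 𝕜 (writtenInExtChartAt I I' x f) z := by
  have hsrc : ∀ᶠ z in 𝓝 (extChartAt I x x),
      f ((extChartAt I x).symm z) ∈ (chartAt H' (f x)).source :=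
    (continuousAt_extChartAt_symm x).preimage_mem_nhds <|
      hf.continuous.continuousAt.preimage_mem_nhds
        (by rw [extChartAt_to_inv]; exact chart_source_mem_nhds H' (f x))
  filter_upwards [extChartAt_target_mem_nhds x, hsrc] with z hz hfz
  have hz' : (extChartAt I x).symm z ∈ (chartAt H x).source := by
    rw [← extChartAt_source I]; exact (extChartAt I x).map_target hz
  have hd := ((mdifferentiableAt_iff_of_mem_source hz' hfz).1 (hf _)).2
  rwa [(extChartAt I x).right_inv hz, I.range_eq_univ, differentiableWithinAt_univ] at hd

end ChartRepresentation

theorem isOpen_setOf_eventually_eq {X Y : Type*} [TopologicalSpace X] (f : X → Y) :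
    IsOpen {x | ∀ᶠ y in 𝓝 x, f y = f x} := by
  refine isOpen_iff_mem_nhds.2 fun x hx => ?_
  filter_upwards [hx.eventually_nhds, hx] with y hy hyx
  exact hy.mono fun w hw => hw.trans hyx.symm

section RiemannSurface

variable {M : Type*} [TopologicalSpace M] [ChartedSpace ℂ M] [IsManifold 𝓘(ℂ, ℂ) 1 M]
  {N : Type*} [TopologicalSpace N] [ChartedSpace ℂ N] [IsManifold 𝓘(ℂ, ℂ) 1 N]
  {f : M → N}

theorem MDifferentiable.eventually_analyticAt_writtenInExtChartAt
    (hf : MDifferentiable 𝓘(ℂ, ℂ) 𝓘(ℂ, ℂ) f) (x : M) :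
    ∀ᶠ z in 𝓝 (extChartAt 𝓘(ℂ, ℂ) x x),
      AnalyticAt ℂ (writtenInExtChartAt 𝓘(ℂ, ℂ) 𝓘(ℂ, ℂ) x f) z :=
  (hf.eventually_differentiableAt_writtenInExtChartAt x).eventually_nhds.mono
    fun _ hz => Complex.analyticAt_iff_eventually_differentiableAt.2 hz

theorem MDifferentiable.isClosed_setOf_eventually_eq
    (hf : MDifferentiable 𝓘(ℂ, ℂ) 𝓘(ℂ, ℂ) f) : IsClosed {x | ∀ᶠ y in 𝓝 x, f y = f x} := by
  refine isClosed_of_closure_subset fun x hx => ?_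
  set φ := extChartAt 𝓘(ℂ, ℂ) x
  set g := writtenInExtChartAt 𝓘(ℂ, ℂ) 𝓘(ℂ, ℂ) x f
  obtain ⟨r, hr, hball⟩ :=
    Metric.eventually_nhds_iff_ball.1 (hf.eventually_analyticAt_writtenInExtChartAt x)
  have hnhds : φ.source ∩ φ ⁻¹' Metric.ball (φ x) r ∈ 𝓝 x :=
    inter_mem (extChartAt_source_mem_nhds x)
      ((continuousAt_extChartAt x).preimage_mem_nhds (Metric.ball_mem_nhds _ hr))
  obtain ⟨y, ⟨hy, hyr⟩, hyS⟩ := mem_closure_iff_nhds.1 hx _ hnhds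
  -- `g` is constant near `φ y`, hence on the whole ball by the identity theorem
  have hconst : EqOn g (fun _ => extChartAt 𝓘(ℂ, ℂ) (f x) (f y)) (Metric.ball (φ x) r) :=
    AnalyticOnNhd.eqOn_of_preconnected_of_eventuallyEq hball analyticOnNhd_const
      (convex_ball _ _).isPreconnected hyr
      (writtenInExtChartAt_eventuallyEq_const_of_eventually_eq hy hyS)
  exact hf.continuous.continuousAt.eventually_eq_of_writtenInExtChartAt_eventuallyEq_const
    (eventually_of_mem (Metric.ball_mem_nhds _ hr) hconst)

theorem MDifferentiable.apply_eq_of_eventually_eq [PreconnectedSpace M]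
    (hf : MDifferentiable 𝓘(ℂ, ℂ) 𝓘(ℂ, ℂ) f) {x₀ : M} (h : ∀ᶠ y in 𝓝 x₀, f y = f x₀)
    (x : M) : f x = f x₀ := by
  have hS : {x | ∀ᶠ y in 𝓝 x, f y = f x} = univ :=
    IsClopen.eq_univ ⟨hf.isClosed_setOf_eventually_eq, isOpen_setOf_eventually_eq f⟩ ⟨x₀, h⟩
  exact ((IsLocallyConstant.iff_eventually_eq f).2 fun x => (hS.symm ▸ mem_univ x :))
    |>.apply_eq_of_preconnectedSpace x x₀

theorem MDifferentiable.eventually_eq_or_eventually_ne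
    (hf : MDifferentiable 𝓘(ℂ, ℂ) 𝓘(ℂ, ℂ) f) (x : M) :
    (∀ᶠ y in 𝓝 x, f y = f x) ∨ ∀ᶠ y in 𝓝[≠] x, f y ≠ f x := by
  set φ := extChartAt 𝓘(ℂ, ℂ) x
  set g := writtenInExtChartAt 𝓘(ℂ, ℂ) 𝓘(ℂ, ℂ) x f
  rcases (hf.eventually_analyticAt_writtenInExtChartAt x).self_of_nhds
    |>.eventually_eq_or_eventually_ne (analyticAt_const (v := g (φ x))) with hconst | hne
  · exact .inl (hf.continuous.continuousAt.eventually_eq_of_writtenInExtChartAt_eventuallyEq_const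
      hconst)
  right
  have hrep := writtenInExtChartAt_comp_extChartAt_eventuallyEq (I := 𝓘(ℂ, ℂ)) (I' := 𝓘(ℂ, ℂ))
    (f := f) (x := x)
  rw [eventually_nhdsWithin_iff] at hne ⊢
  filter_upwards [extChartAt_source_mem_nhds (I := 𝓘(ℂ, ℂ)) x, hrep,
    (continuousAt_extChartAt x).eventually hne] with y hy hgy hne hyx hfy
  refine hne (fun h => hyx (φ.injOn hy (mem_extChartAt_source x) h)) ?_
  simp only [Function.comp_apply] at hgy
  rw [hgy, hfy]; exact hrep.self_of_nhds.symm

theorem MDifferentiable.eventually_constant_or_nhds_le_map_nhds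
    (hf : MDifferentiable 𝓘(ℂ, ℂ) 𝓘(ℂ, ℂ) f) (x : M) :
    (∀ᶠ y in 𝓝 x, f y = f x) ∨ 𝓝 (f x) ≤ map f (𝓝 x) := by
  set φ := extChartAt 𝓘(ℂ, ℂ) x
  set ψ := extChartAt 𝓘(ℂ, ℂ) (f x)
  set g := writtenInExtChartAt 𝓘(ℂ, ℂ) 𝓘(ℂ, ℂ) x f
  rcases (hf.eventually_analyticAt_writtenInExtChartAt x).self_of_nhds
    |>.eventually_constant_or_nhds_le_map_nhds with hconst | hopen
  · exact .inl (hf.continuous.continuousAt.eventually_eq_of_writtenInExtChartAt_eventuallyEq_const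
      hconst)
  right
  have hψ : map ψ.symm (𝓝 (g (φ x))) = 𝓝 (f x) := by
    simpa [g, φ, ψ, writtenInExtChartAt] using
      map_extChartAt_symm_nhdsWithin_range (I := 𝓘(ℂ, ℂ)) (f x)
  calc 𝓝 (f x) = map ψ.symm (𝓝 (g (φ x))) := hψ.symm
    _ ≤ map ψ.symm (map g (map φ (𝓝 x))) := by
      rw [map_extChartAt_nhds_of_boundaryless]; exact map_mono hopen
    _ = map f (𝓝 x) := by
      rw [map_map, map_map]
      exact map_congr
        hf.continuous.continuousAt.eventuallyEq_extChartAt_symm_comp_writtenInExtChartAt.symm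

end RiemannSurface

theorem stmt7_general
    {M : Type*} [TopologicalSpace M] [ChartedSpace ℂ M]
    [IsManifold 𝓘(ℂ, ℂ) (⊤ : ℕ∞) M]
    [CompactSpace M] [ConnectedSpace M]
    {N : Type*} [TopologicalSpace N] [ChartedSpace ℂ N]
    [IsManifold 𝓘(ℂ, ℂ) (⊤ : ℕ∞) N] [T2Space N]
    [ConnectedSpace N]
    (f : M → N) (hf : MDifferentiable 𝓘(ℂ, ℂ) 𝓘(ℂ, ℂ) f)
    (hnc : ¬∃ c : N, ∀ x : M, f x = c) :
    ∀ p : N, (f ⁻¹' {p}).Finite ∧ (f ⁻¹' {p}).Nonempty := by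
  have hnowhere_const (x : M) : ¬∀ᶠ y in 𝓝 x, f y = f x :=
    fun hx => hnc ⟨f x, hf.apply_eq_of_eventually_eq hx⟩
  have hopen : IsOpenMap f := isOpenMap_iff_nhds_le.2 fun x =>
    (hf.eventually_constant_or_nhds_le_map_nhds x).resolve_left (hnowhere_const x)
  have hrange : range f = univ :=
    IsClopen.eq_univ ⟨(isCompact_range hf.continuous).isClosed, hopen.isOpen_range⟩
      (range_nonempty f)
  intro p
  refine ⟨(isClosed_singleton.preimage hf.continuous).isCompact.finite
    (isDiscrete_iff_nhdsNE.2 fun x hx => inf_principal_eq_bot.2 ?_), range_eq_univ.1 hrange p⟩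
  filter_upwards [(hf.eventually_eq_or_eventually_ne x).resolve_left (hnowhere_const x)]
    with y hy
  exact fun hyp => hy (hyp.trans (hx : f x = p).symm)

/-- A nonconstant holomorphic map between compact connected Riemann surfaces is a surjective
branched covering of finite degree: every fiber is finite and nonempty. -/
theorem stmt7
    {M : Type*} [TopologicalSpace M] [ChartedSpace ℂ M]
    [IsManifold 𝓘(ℂ, ℂ) (⊤ : ℕ∞) M] [T2Space M]
    [CompactSpace M] [ConnectedSpace M]
    {N : Type*} [TopologicalSpace N] [ChartedSpace ℂ N]
    [IsManifold 𝓘(ℂ, ℂ) (⊤ : ℕ∞) N] [T2Space N]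
    [CompactSpace N] [ConnectedSpace N]
    (f : M → N) (hf : MDifferentiable 𝓘(ℂ, ℂ) 𝓘(ℂ, ℂ) f)
    (hnc : ¬∃ c : N, ∀ x : M, f x = c) :
    ∀ p : N, (f ⁻¹' {p}).Finite ∧ (f ⁻¹' {p}).Nonempty :=
  stmt7_general f hf hnc
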